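/- arXiv:0710.0772 — 3 statements merged into one kernel-verified Lean document; each statement's English description precedes it below -/
import Mathlib

section
/- Suppose $1 < \gamma < p < 2$, and choose $\beta, \rho > 0$ with $\gamma < \rho/\beta < (\rho+1)/\beta < p$. Define $x^1(t) = t^\beta \cos(t^{-\rho})$ and $x^2(t) = t^\beta(2 + \sin(t^{-\rho}))$ for $t > 0$, with $x^1(0)=x^2(0)=0$. Then $x^1$ and $x^2$ are Hölder continuous of exponent $\alpha = 1/p$ on $[0,1]$. Moreover, $x^2(t) > 0$ for $t > 0$, and for all sufficiently small $t > 0$ one has $\int_0^t (x^2(s))^\gamma\, dx^1(s) \ge \mathrm{const} \cdot t^{\beta(\gamma+1)-\rho} \ge 3 t^\beta \ge x^2(t)$, where the integral is the classical Riemann–Stieltjes integral (well-defined since $x^1$ is locally Lipschitz on $(0,1]$). -/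
/-!
Both paths have the form `t ^ β * F (t ^ (-ρ))` with `F` bounded and Lipschitz. Their increment
over `[s, t]` is `(t ^ β - s ^ β) F + s ^ β (F (t ^ (-ρ)) - F (s ^ (-ρ)))`; the second term is at
most `2M s ^ β` when `t - s ≥ s ^ (ρ + 1)` and is controlled by the mean value theorem for
`s ↦ s ^ (-ρ)` otherwise, and `α (ρ + 1) ≤ β` turns both bounds into `O((t - s) ^ α)`.

The substitution `u = s ^ (-ρ)` turns `∫₀ᵗ (x²) ^ γ dx¹` into
`∫_U^∞ u ^ (-κ) (2 + sin u) ^ γ sin u du + O(U ^ (-κ))` with `U = t ^ (-ρ)` and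
`κ = β (γ + 1) / ρ > 1`. Integrating by parts against a bounded primitive, a continuous periodic
integrand may be replaced by its mean at the cost of another `O(U ^ (-κ))`, and the mean of
`(2 + sin u) ^ γ sin u` is positive. The resulting bound `c U ^ (1 - κ) = c t ^ (β (γ + 1) - ρ)`
dominates `3 t ^ β` near `0` because `β γ < ρ`.
-/

open Real Set MeasureTheory Filter Topology

lemma Convex.abs_rpow_sub_rpow_le {q C : ℝ} {D : Set ℝ} (hD : Convex ℝ D)
    (hd : ∀ v ∈ D, v ≠ 0 ∨ 1 ≤ q) (hC : ∀ v ∈ D, |q * v ^ (q - 1)| ≤ C)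
    {x y : ℝ} (hx : x ∈ D) (hy : y ∈ D) : |x ^ q - y ^ q| ≤ C * |x - y| :=
  hD.norm_image_sub_le_of_norm_hasDerivWithin_le
    (fun v hv => (hasDerivAt_rpow_const (hd v hv)).hasDerivWithinAt) hC hy hx

section HolderPaths

variable {α β ρ s t : ℝ}

lemma rpow_sub_rpow_le_mul_rpow_sub (hα : 0 ≤ α) (hαβ : α ≤ β) (hα1 : α ≤ 1) (hs : 0 ≤ s)
    (hst : s ≤ t) (ht : t ≤ 1) : t ^ β - s ^ β ≤ (β + 1) * (t - s) ^ α := by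
  have hts : 0 ≤ t - s := sub_nonneg.2 hst
  have hα_pow : 0 ≤ (t - s) ^ α := rpow_nonneg hts α
  rcases le_total β 1 with hβ1 | hβ1
  · have hsub : t ^ β ≤ s ^ β + (t - s) ^ β := by
      simpa only [add_sub_cancel] using rpow_add_le_add_rpow hs hts (hα.trans hαβ) hβ1
    have hmono : (t - s) ^ β ≤ (t - s) ^ α :=
      rpow_le_rpow_of_exponent_ge' hts (by linarith) hα hαβ
    nlinarith
  · have hlip : |t ^ β - s ^ β| ≤ β * |t - s| := by
      refine (convex_Icc 0 1).abs_rpow_sub_rpow_le (fun _ _ => Or.inr hβ1) (fun v hv => ?_)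
        ⟨hs.trans hst, ht⟩ ⟨hs, hst.trans ht⟩
      rw [abs_of_nonneg (mul_nonneg (by linarith) (rpow_nonneg hv.1 _))]
      exact mul_le_of_le_one_right (by linarith) (rpow_le_one hv.1 hv.2 (by linarith))
    have hmono : t - s ≤ (t - s) ^ α := by
      simpa only [rpow_one] using rpow_le_rpow_of_exponent_ge' hts (by linarith) hα hα1
    rw [abs_of_nonneg hts] at hlip
    nlinarith [le_abs_self (t ^ β - s ^ β)]

lemma rpow_mul_abs_sub_comp_rpow_neg_le {F : ℝ → ℝ} {M L : ℝ} (hFM : ∀ u, |F u| ≤ M)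
    (hFL : ∀ u v, |F u - F v| ≤ L * |u - v|) (hL : 0 ≤ L) (hβ : 0 < β) (hρ : 0 < ρ)
    (hα1 : α ≤ 1) (hαρβ : α * (ρ + 1) ≤ β) (hs : 0 ≤ s) (hst : s < t) (ht : t ≤ 1) :
    s ^ β * |F (t ^ (-ρ)) - F (s ^ (-ρ))| ≤ (2 * M + L * ρ) * (t - s) ^ α := by
  have hts : 0 < t - s := sub_pos.2 hst
  have hα_pow : 0 < (t - s) ^ α := rpow_pos_of_pos hts α
  have hM : 0 ≤ M := (abs_nonneg _).trans (hFM 0)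
  rcases hs.eq_or_lt with rfl | hs
  · rw [zero_rpow hβ.ne', zero_mul]
    positivity
  have hsβ : 0 < s ^ β := rpow_pos_of_pos hs β
  rcases le_or_gt (s ^ (ρ + 1)) (t - s) with hfar | hnear
  · have hsβ_le : s ^ β ≤ (t - s) ^ α := calc
      s ^ β = (s ^ (ρ + 1)) ^ (β / (ρ + 1)) := by
        rw [← rpow_mul hs.le, mul_div_cancel₀ _ (by linarith)]
      _ ≤ (t - s) ^ (β / (ρ + 1)) := rpow_le_rpow (by positivity) hfar (by positivity)
      _ ≤ (t - s) ^ α := rpow_le_rpow_of_exponent_ge hts (by linarith)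
          ((le_div_iff₀ (by linarith)).2 hαρβ)
    have hF2 : |F (t ^ (-ρ)) - F (s ^ (-ρ))| ≤ 2 * M :=
      (abs_sub _ _).trans (by linarith [hFM (t ^ (-ρ)), hFM (s ^ (-ρ))])
    calc s ^ β * |F (t ^ (-ρ)) - F (s ^ (-ρ))| ≤ (t - s) ^ α * (2 * M) :=
          mul_le_mul hsβ_le hF2 (abs_nonneg _) hα_pow.le
      _ ≤ (2 * M + L * ρ) * (t - s) ^ α := by nlinarith [mul_nonneg hL hρ.le]
  · have hmvt : |t ^ (-ρ) - s ^ (-ρ)| ≤ ρ * s ^ (-ρ - 1) * |t - s| := by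
      refine (convex_Icc s t).abs_rpow_sub_rpow_le (fun v hv => Or.inl (hs.trans_le hv.1).ne')
        (fun v hv => ?_) (right_mem_Icc.2 hst.le) (left_mem_Icc.2 hst.le)
      rw [abs_mul, abs_neg, abs_of_pos hρ, abs_of_pos (rpow_pos_of_pos (hs.trans_le hv.1) _)]
      exact mul_le_mul_of_nonneg_left (rpow_le_rpow_of_nonpos hs hv.1 (by linarith)) hρ.le
    have hsplit : t - s = (t - s) ^ (1 - α) * (t - s) ^ α := by
      rw [← rpow_add hts, sub_add_cancel, rpow_one]
    have hgap : s ^ (β - ρ - 1) * (t - s) ^ (1 - α) ≤ 1 := calc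
      s ^ (β - ρ - 1) * (t - s) ^ (1 - α) ≤ s ^ (β - ρ - 1) * s ^ ((ρ + 1) * (1 - α)) := by
        rw [rpow_mul hs.le]
        exact mul_le_mul_of_nonneg_left (rpow_le_rpow hts.le hnear.le (by linarith))
          (rpow_nonneg hs.le _)
      _ = s ^ (β - α * (ρ + 1)) := by rw [← rpow_add hs]; ring_nf
      _ ≤ 1 := rpow_le_one hs.le (by linarith) (by linarith)
    calc s ^ β * |F (t ^ (-ρ)) - F (s ^ (-ρ))|
        ≤ s ^ β * (L * (ρ * s ^ (-ρ - 1) * (t - s))) := by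
          refine mul_le_mul_of_nonneg_left ((hFL _ _).trans ?_) hsβ.le
          rw [← abs_of_pos hts]
          exact mul_le_mul_of_nonneg_left hmvt hL
      _ = L * ρ * (s ^ (β - ρ - 1) * (t - s) ^ (1 - α)) * (t - s) ^ α := by
          rw [show β - ρ - 1 = β + (-ρ - 1) by ring, rpow_add hs]
          nth_rewrite 1 [hsplit]
          ring
      _ ≤ L * ρ * 1 * (t - s) ^ α :=
          mul_le_mul_of_nonneg_right (mul_le_mul_of_nonneg_left hgap (mul_nonneg hL hρ.le))
            hα_pow.le
      _ ≤ (2 * M + L * ρ) * (t - s) ^ α := by nlinarith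

variable {F : ℝ → ℝ} {M L : ℝ}

lemma abs_rpow_mul_comp_rpow_neg_sub_le (hFM : ∀ u, |F u| ≤ M)
    (hFL : ∀ u v, |F u - F v| ≤ L * |u - v|) (hL : 0 ≤ L) (hβ : 0 < β) (hρ : 0 < ρ)
    (hα : 0 ≤ α) (hα1 : α ≤ 1) (hαρβ : α * (ρ + 1) ≤ β) (hs : 0 ≤ s) (hst : s ≤ t)
    (ht : t ≤ 1) :
    |t ^ β * F (t ^ (-ρ)) - s ^ β * F (s ^ (-ρ))| ≤
      ((β + 1) * M + 2 * M + L * ρ) * (t - s) ^ α := by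
  have hM : 0 ≤ M := (abs_nonneg _).trans (hFM 0)
  rcases hst.eq_or_lt with rfl | hst
  · rw [sub_self, abs_zero]
    positivity
  have hgrowth : 0 ≤ t ^ β - s ^ β := sub_nonneg.2 (rpow_le_rpow hs hst.le hβ.le)
  calc |t ^ β * F (t ^ (-ρ)) - s ^ β * F (s ^ (-ρ))|
      = |(t ^ β - s ^ β) * F (t ^ (-ρ)) + s ^ β * (F (t ^ (-ρ)) - F (s ^ (-ρ)))| := by ring_nf
    _ ≤ (t ^ β - s ^ β) * M + s ^ β * |F (t ^ (-ρ)) - F (s ^ (-ρ))| := by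
        refine (abs_add_le _ _).trans (add_le_add ?_ ?_)
        · rw [abs_mul, abs_of_nonneg hgrowth]
          exact mul_le_mul_of_nonneg_left (hFM _) hgrowth
        · rw [abs_mul, abs_of_nonneg (rpow_nonneg hs β)]
    _ ≤ (β + 1) * (t - s) ^ α * M + (2 * M + L * ρ) * (t - s) ^ α := by
        refine add_le_add (mul_le_mul_of_nonneg_right ?_ hM)
          (rpow_mul_abs_sub_comp_rpow_neg_le hFM hFL hL hβ hρ hα1 hαρβ hs hst ht)
        exact rpow_sub_rpow_le_mul_rpow_sub hα (by nlinarith) hα1 hs hst.le ht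
    _ = ((β + 1) * M + 2 * M + L * ρ) * (t - s) ^ α := by ring

lemma exists_holder_of_eq_rpow_mul_comp_rpow_neg {x : ℝ → ℝ}
    (hx : ∀ t, 0 < t → x t = t ^ β * F (t ^ (-ρ))) (hx0 : x 0 = 0) (hFM : ∀ u, |F u| ≤ M)
    (hFL : ∀ u v, |F u - F v| ≤ L * |u - v|) (hL : 0 ≤ L) (hβ : 0 < β) (hρ : 0 < ρ)
    (hα : 0 ≤ α) (hα1 : α ≤ 1) (hαρβ : α * (ρ + 1) ≤ β) :
    ∃ C > 0, ∀ s ∈ Icc (0 : ℝ) 1, ∀ t ∈ Icc (0 : ℝ) 1, |x s - x t| ≤ C * |s - t| ^ α := by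
  have hx' : ∀ t, 0 ≤ t → x t = t ^ β * F (t ^ (-ρ)) := fun t ht => by
    rcases ht.eq_or_lt with rfl | ht
    · rw [hx0, zero_rpow hβ.ne', zero_mul]
    · exact hx t ht
  have hM : 0 ≤ M := (abs_nonneg _).trans (hFM 0)
  set C := (β + 1) * M + 2 * M + L * ρ
  have hC : 0 ≤ C := by positivity
  have hmono : ∀ s ∈ Icc (0 : ℝ) 1, ∀ t ∈ Icc (0 : ℝ) 1, s ≤ t →
      |x t - x s| ≤ (C + 1) * (t - s) ^ α := fun s hs t ht hst => by
    rw [hx' s hs.1, hx' t (hs.1.trans hst)]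
    exact (abs_rpow_mul_comp_rpow_neg_sub_le hFM hFL hL hβ hρ hα hα1 hαρβ hs.1 hst ht.2).trans
      (mul_le_mul_of_nonneg_right (by linarith) (rpow_nonneg (sub_nonneg.2 hst) α))
  refine ⟨C + 1, by linarith, fun s hs t ht => ?_⟩
  rcases le_total s t with hst | hts
  · rw [abs_sub_comm, abs_sub_comm s]
    simpa only [abs_of_nonneg (sub_nonneg.2 hst)] using hmono s hs t ht hst
  · simpa only [abs_of_nonneg (sub_nonneg.2 hts)] using hmono t ht s hs hts

end HolderPaths

section TailIntegrals

variable {q K V : ℝ} {g : ℝ → ℝ}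

lemma integral_Ioi_rpow_neg (hq : 1 < q) (hV : 0 < V) :
    ∫ u in Ioi V, u ^ (-q) = V ^ (1 - q) / (q - 1) := by
  rw [integral_Ioi_rpow_of_lt (by linarith) hV, ← neg_div_neg_eq, neg_neg]
  ring_nf

lemma integrableOn_Ioi_rpow_neg_mul (hq : 1 < q) (hV : 0 < V) (hg : Continuous g)
    (hgK : ∀ u, |g u| ≤ K) : IntegrableOn (fun u => u ^ (-q) * g u) (Ioi V) :=
  (integrableOn_Ioi_rpow_of_lt (by linarith) hV).mul_bdd hg.aestronglyMeasurable
    (ae_of_all _ hgK)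

lemma abs_integral_Ioi_rpow_neg_mul_le (hq : 1 < q) (hV : 0 < V) (hgK : ∀ u, |g u| ≤ K) :
    |∫ u in Ioi V, u ^ (-q) * g u| ≤ K * (V ^ (1 - q) / (q - 1)) := by
  have hbound : ∀ᵐ u ∂(volume.restrict (Ioi V)), ‖u ^ (-q) * g u‖ ≤ K * u ^ (-q) := by
    filter_upwards [ae_restrict_mem measurableSet_Ioi] with u hu
    rw [norm_mul, norm_of_nonneg (rpow_nonneg (hV.trans hu).le _), mul_comm]
    exact mul_le_mul_of_nonneg_right (hgK u) (rpow_nonneg (hV.trans hu).le _)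
  calc |∫ u in Ioi V, u ^ (-q) * g u|
      ≤ ∫ u in Ioi V, K * u ^ (-q) :=
        norm_integral_le_of_norm_le ((integrableOn_Ioi_rpow_of_lt (by linarith) hV).const_mul K)
          hbound
    _ = K * (V ^ (1 - q) / (q - 1)) := by rw [integral_const_mul, integral_Ioi_rpow_neg hq hV]

end TailIntegrals

namespace Function.Periodic

variable {f : ℝ → ℝ} {T q : ℝ}

lemma exists_forall_abs_le (hf : Periodic f T) (hT : T ≠ 0) (hfc : Continuous f) :
    ∃ K, ∀ u, |f u| ≤ K := by
  obtain ⟨K, hK⟩ := isBounded_iff_forall_norm_le.1 (hf.isBounded_of_continuous hT hfc)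
  exact ⟨K, fun u => hK _ (mem_range_self u)⟩

lemma periodic_primitive_of_integral_eq_zero (hf : Periodic f T) (hfc : Continuous f)
    (h0 : ∫ u in 0..T, f u = 0) : Periodic (fun x => ∫ u in 0..x, f u) T := fun x => by
  simp only [hf.intervalIntegral_add_eq_add 0 x (fun _ _ => hfc.intervalIntegrable _ _), zero_add,
    h0, add_zero]

lemma exists_abs_integral_Ioi_rpow_neg_mul_le (hf : Periodic f T) (hT : T ≠ 0)
    (hfc : Continuous f) (h0 : ∫ u in 0..T, f u = 0) (hq : 1 < q) :
    ∃ B, ∀ V > 0, |∫ u in Ioi V, u ^ (-q) * f u| ≤ B * V ^ (-q) := by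
  set G : ℝ → ℝ := fun x => ∫ u in 0..x, f u
  have hGc : Continuous G :=
    intervalIntegral.continuous_primitive (fun _ _ => hfc.intervalIntegrable _ _) 0
  obtain ⟨K, hK⟩ := (hf.periodic_primitive_of_integral_eq_zero hfc h0).exists_forall_abs_le hT hGc
  obtain ⟨Kf, hKf⟩ := hf.exists_forall_abs_le hT hfc
  refine ⟨2 * K, fun V hV => ?_⟩
  have hibp := integral_Ioi_mul_deriv_eq_deriv_mul (a := V) (u := fun x => x ^ (-q))
    (u' := fun x => -q * x ^ (-(q + 1))) (v := G) (v' := f) (a' := V ^ (-q) * G V) (b' := 0)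
    (fun x hx => (hasDerivAt_rpow_const (p := -q) (Or.inl (hV.trans hx).ne')).congr_deriv
      (by rw [neg_add']))
    (fun x _ => hfc.integral_hasStrictDerivAt 0 x |>.hasDerivAt)
    (integrableOn_Ioi_rpow_neg_mul hq hV hfc hKf)
    (by simpa only [IntegrableOn, Pi.mul_def, mul_assoc] using
      (integrableOn_Ioi_rpow_neg_mul (by linarith) hV hGc hK).const_mul (-q))
    ((continuousAt_rpow_const _ _ (Or.inl hV.ne')).mul hGc.continuousAt).continuousWithinAt
    ((tendsto_rpow_neg_atTop (by linarith)).zero_mul_isBoundedUnder_le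
      (isBoundedUnder_of ⟨K, fun x => (Real.norm_eq_abs _).le.trans (hK x)⟩))
  have hrest := abs_integral_Ioi_rpow_neg_mul_le (by linarith : 1 < q + 1) hV hK
  rw [show 1 - (q + 1) = -q by ring, add_sub_cancel_right] at hrest
  have hVq : 0 < V ^ (-q) := rpow_pos_of_pos hV _
  have hpull : ∫ x in Ioi V, -q * x ^ (-(q + 1)) * G x =
      -q * ∫ x in Ioi V, x ^ (-(q + 1)) * G x := by
    simp only [mul_assoc, integral_const_mul]
  rw [hibp, hpull]
  calc |0 - V ^ (-q) * G V - -q * ∫ x in Ioi V, x ^ (-(q + 1)) * G x|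
      = |V ^ (-q) * G V - q * ∫ x in Ioi V, x ^ (-(q + 1)) * G x| := by
        rw [← abs_neg]; ring_nf
    _ ≤ V ^ (-q) * K + q * (K * (V ^ (-q) / q)) := by
        refine (abs_sub _ _).trans (add_le_add ?_ ?_)
        · rw [abs_mul, abs_of_pos hVq]; exact mul_le_mul_of_nonneg_left (hK V) hVq.le
        · rw [abs_mul, abs_of_pos (by linarith : 0 < q)]
          exact mul_le_mul_of_nonneg_left hrest (by linarith)
    _ = 2 * K * V ^ (-q) := by field_simp; ring

lemma exists_abs_integral_Ioi_rpow_neg_mul_sub_le (hf : Periodic f T) (hT : T ≠ 0)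
    (hfc : Continuous f) (hq : 1 < q) :
    ∃ B, ∀ V > 0, |(∫ u in Ioi V, u ^ (-q) * f u) -
      (∫ u in 0..T, f u) / T * (V ^ (1 - q) / (q - 1))| ≤ B * V ^ (-q) := by
  set m := (∫ u in 0..T, f u) / T
  have h0 : ∫ u in 0..T, (f u - m) = 0 := by
    rw [intervalIntegral.integral_sub (hfc.intervalIntegrable _ _) intervalIntegrable_const,
      intervalIntegral.integral_const, smul_eq_mul, sub_zero, mul_div_cancel₀ _ hT, sub_self]
  have hper : Periodic (fun u => f u - m) T := fun x => by simp only [hf x]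
  obtain ⟨B, hB⟩ := hper.exists_abs_integral_Ioi_rpow_neg_mul_le hT
    (hfc.sub continuous_const) h0 hq
  obtain ⟨Kf, hKf⟩ := hf.exists_forall_abs_le hT hfc
  refine ⟨B, fun V hV => ?_⟩
  have hsplit : ∫ u in Ioi V, u ^ (-q) * f u =
      (∫ u in Ioi V, u ^ (-q) * (f u - m)) + m * ∫ u in Ioi V, u ^ (-q) := by
    rw [← integral_const_mul, ← integral_add]
    · congr 1 with u; ring
    · exact integrableOn_Ioi_rpow_neg_mul hq hV (hfc.sub continuous_const)
        (fun u => (abs_sub _ _).trans (add_le_add (hKf u) le_rfl))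
    · exact (integrableOn_Ioi_rpow_of_lt (by linarith) hV).const_mul m
  rw [integral_Ioi_rpow_neg hq hV] at hsplit
  rw [hsplit, add_sub_cancel_right]
  exact hB V hV

end Function.Periodic

lemma integral_two_add_sin_rpow_mul_sin_pos {γ : ℝ} (hγ : 0 < γ) :
    0 < ∫ u in 0..2 * π, (2 + sin u) ^ γ * sin u := by
  set f : ℝ → ℝ := fun u => (2 + sin u) ^ γ * sin u
  have hfc : Continuous f :=
    ((continuous_const.add continuous_sin).rpow_const fun _ => Or.inr hγ.le).mul continuous_sin
  have hint : ∀ a b : ℝ, IntervalIntegrable f volume a b := fun a b => hfc.intervalIntegrable a b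
  have hshift : IntervalIntegrable (fun u => f (u + π)) volume 0 π :=
    (hfc.comp (continuous_add_const π)).intervalIntegrable 0 π
  -- pairing `u` with `u + π` trades the sign of `sin` for the weight `(2 ± sin u) ^ γ`
  have hfold : ∫ u in 0..2 * π, f u = ∫ u in 0..π, (f u + f (u + π)) := by
    rw [intervalIntegral.integral_add (hint 0 π) hshift,
      intervalIntegral.integral_comp_add_right, zero_add, two_mul,
      intervalIntegral.integral_add_adjacent_intervals (hint _ _) (hint _ _)]
  rw [hfold]
  refine intervalIntegral.intervalIntegral_pos_of_pos_on
    ((hint 0 π).add hshift) (fun u hu => ?_) pi_pos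
  have hsin : 0 < sin u := sin_pos_of_pos_of_lt_pi hu.1 hu.2
  have hweight : (2 - sin u) ^ γ < (2 + sin u) ^ γ :=
    rpow_lt_rpow (by linarith [sin_le_one u]) (by linarith) hγ
  simp only [f, sin_add_pi, ← sub_eq_add_neg]
  nlinarith

lemma hasDerivAt_rpow_mul_cos_rpow_neg {β ρ s : ℝ} (hs : 0 < s) :
    HasDerivAt (fun s => s ^ β * cos (s ^ (-ρ)))
      (β * s ^ (β - 1) * cos (s ^ (-ρ)) + ρ * s ^ (β - ρ - 1) * sin (s ^ (-ρ))) s := by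
  have hpow := (hasDerivAt_rpow_const (p := β) (Or.inl hs.ne')).mul
    ((hasDerivAt_rpow_const (p := -ρ) (Or.inl hs.ne')).cos)
  refine hpow.congr_deriv ?_
  rw [show β - ρ - 1 = β + (-ρ - 1) by ring, rpow_add hs]
  ring

lemma integral_Ioc_mul_comp_rpow_neg {ρ t : ℝ} (hρ : 0 < ρ) (ht : 0 < t) (φ : ℝ → ℝ) :
    ∫ s in Ioc 0 t, ρ * s ^ (-ρ - 1) * φ (s ^ (-ρ)) = ∫ u in Ioi (t ^ (-ρ)), φ u := by
  have himage : (fun s : ℝ => s ^ (-ρ)) '' Ioc 0 t = Ici (t ^ (-ρ)) := by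
    refine Subset.antisymm ?_ fun u hu => ?_
    · rintro _ ⟨s, hs, rfl⟩
      exact rpow_le_rpow_of_nonpos hs.1 hs.2 (by linarith)
    have hu0 : 0 < u := (rpow_pos_of_pos ht _).trans_le hu
    refine ⟨u ^ (-ρ⁻¹), ⟨rpow_pos_of_pos hu0 _, ?_⟩, ?_⟩
    · calc u ^ (-ρ⁻¹) ≤ (t ^ (-ρ)) ^ (-ρ⁻¹) :=
            rpow_le_rpow_of_nonpos (rpow_pos_of_pos ht _) hu (by simp [hρ.le])
        _ = t := by rw [← rpow_mul ht.le, neg_mul_neg, mul_inv_cancel₀ hρ.ne', rpow_one]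
    · dsimp only
      rw [← rpow_mul hu0.le, neg_mul_neg, inv_mul_cancel₀ hρ.ne', rpow_one]
  have hderiv : ∀ s ∈ Ioc 0 t,
      HasDerivWithinAt (fun s : ℝ => s ^ (-ρ)) (-ρ * s ^ (-ρ - 1)) (Ioc 0 t) s :=
    fun s hs => (hasDerivAt_rpow_const (Or.inl hs.1.ne')).hasDerivWithinAt
  have hinj : InjOn (fun s : ℝ => s ^ (-ρ)) (Ioc 0 t) :=
    ((strictAntiOn_rpow_Ioi_of_exponent_neg (by linarith)).mono fun _ hs => hs.1).injOn
  rw [← integral_Ici_eq_integral_Ioi, ← himage,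
    integral_image_eq_integral_abs_deriv_smul measurableSet_Ioc hderiv hinj]
  refine setIntegral_congr_fun measurableSet_Ioc fun s hs => ?_
  rw [smul_eq_mul, abs_mul, abs_neg, abs_of_pos hρ, abs_of_pos (rpow_pos_of_pos hs.1 _)]

lemma integral_Ioc_rpow_mul_deriv_eq_integral_Ioi {γ β ρ κ t : ℝ} {x₁ x₂ : ℝ → ℝ}
    (hρ : 0 < ρ) (hκ : ρ * κ = β * (γ + 1)) (ht : 0 < t)
    (hx₁ : ∀ t, 0 < t → x₁ t = t ^ β * cos (t ^ (-ρ)))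
    (hx₂ : ∀ t, 0 < t → x₂ t = t ^ β * (2 + sin (t ^ (-ρ)))) :
    ∫ s in Ioc 0 t, x₂ s ^ γ * deriv x₁ s =
      ∫ u in Ioi (t ^ (-ρ)), (u ^ (-κ) * ((2 + sin u) ^ γ * sin u) +
        β / ρ * (u ^ (-(κ + 1)) * ((2 + sin u) ^ γ * cos u))) := by
  rw [← integral_Ioc_mul_comp_rpow_neg hρ ht]
  refine setIntegral_congr_fun measurableSet_Ioc fun s hs => ?_
  have hs : 0 < s := hs.1
  have hderiv : deriv x₁ s =
      β * s ^ (β - 1) * cos (s ^ (-ρ)) + ρ * s ^ (β - ρ - 1) * sin (s ^ (-ρ)) :=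
    ((hasDerivAt_rpow_mul_cos_rpow_neg hs).congr_of_eventuallyEq
      (eventually_of_mem (Ioi_mem_nhds hs) hx₁)).deriv
  have hx₂γ : x₂ s ^ γ = s ^ (β * γ) * (2 + sin (s ^ (-ρ))) ^ γ := by
    rw [hx₂ s hs, mul_rpow (rpow_nonneg hs.le β) (by linarith [neg_one_le_sin (s ^ (-ρ))]),
      ← rpow_mul hs.le]
  have hpow : ∀ e e' e'' : ℝ, e + e' = -ρ - 1 + e'' → s ^ e * s ^ e' = s ^ (-ρ - 1) * s ^ e'' :=
    fun e e' e'' h => by rw [← rpow_add hs, ← rpow_add hs, h]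
  have hmain := hpow (β * γ) (β - ρ - 1) (β * (γ + 1)) (by ring)
  have herr := hpow (β * γ) (β - 1) (β * (γ + 1) + ρ) (by ring)
  simp only [hx₂γ, hderiv, ← rpow_mul hs.le, neg_mul_neg, mul_add, hκ]
  field_simp
  linear_combination (ρ * (2 + sin (s ^ (-ρ))) ^ γ * sin (s ^ (-ρ))) * hmain
    + (β * (2 + sin (s ^ (-ρ))) ^ γ * cos (s ^ (-ρ))) * herr

lemma exists_eventually_le_integral_Ioc {γ β ρ : ℝ} {x₁ x₂ : ℝ → ℝ} (hγ : 0 < γ) (hβ : 0 < β)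
    (hρ : 0 < ρ) (hρβγ : ρ < β * (γ + 1))
    (hx₁ : ∀ t, 0 < t → x₁ t = t ^ β * cos (t ^ (-ρ)))
    (hx₂ : ∀ t, 0 < t → x₂ t = t ^ β * (2 + sin (t ^ (-ρ)))) :
    ∃ c > 0, ∀ᶠ t in 𝓝[>] 0,
      c * t ^ (β * (γ + 1) - ρ) ≤ ∫ s in Ioc 0 t, x₂ s ^ γ * deriv x₁ s := by
  obtain ⟨κ, hκ⟩ : ∃ κ, ρ * κ = β * (γ + 1) := ⟨_, mul_div_cancel₀ _ hρ.ne'⟩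
  have hκ1 : 1 < κ := lt_of_mul_lt_mul_left (by linarith) hρ.le
  have hweight : Continuous fun u => (2 + sin u) ^ γ :=
    (continuous_const.add continuous_sin).rpow_const fun _ => Or.inr hγ.le
  have hfc : Continuous fun u => (2 + sin u) ^ γ * sin u := hweight.mul continuous_sin
  have hgc : Continuous fun u => (2 + sin u) ^ γ * cos u := hweight.mul continuous_cos
  have hfper : Function.Periodic (fun u => (2 + sin u) ^ γ * sin u) (2 * π) := fun u => by
    simp only [sin_add_two_pi]
  have hgper : Function.Periodic (fun u => (2 + sin u) ^ γ * cos u) (2 * π) := fun u => by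
    simp only [sin_add_two_pi, cos_add_two_pi]
  obtain ⟨B, hB⟩ := hfper.exists_abs_integral_Ioi_rpow_neg_mul_sub_le two_pi_pos.ne' hfc hκ1
  obtain ⟨Kf, hKf⟩ := hfper.exists_forall_abs_le two_pi_pos.ne' hfc
  obtain ⟨Kg, hKg⟩ := hgper.exists_forall_abs_le two_pi_pos.ne' hgc
  set a := (∫ u in 0..2 * π, (2 + sin u) ^ γ * sin u) / (2 * π) / (κ - 1)
  have ha : 0 < a := div_pos (div_pos (integral_two_add_sin_rpow_mul_sin_pos hγ) two_pi_pos)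
    (by linarith)
  set D := B + β / ρ * (Kg / κ)
  refine ⟨a / 2, half_pos ha, ?_⟩
  filter_upwards [self_mem_nhdsWithin,
    (tendsto_rpow_neg_nhdsGT_zero (neg_lt_zero.2 hρ)).eventually_ge_atTop (2 * D / a)]
    with t ht hU
  set U := t ^ (-ρ)
  have hU0 : 0 < U := rpow_pos_of_pos ht _
  rw [integral_Ioc_rpow_mul_deriv_eq_integral_Ioi hρ hκ ht hx₁ hx₂,
    integral_add (integrableOn_Ioi_rpow_neg_mul hκ1 hU0 hfc hKf)
      ((integrableOn_Ioi_rpow_neg_mul (by linarith) hU0 hgc hKg).const_mul _),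
    integral_const_mul]
  have hmain := hB U hU0
  have herr := abs_integral_Ioi_rpow_neg_mul_le (by linarith : 1 < κ + 1) hU0 hKg
  rw [show 1 - (κ + 1) = -κ by ring, add_sub_cancel_right] at herr
  have hexp : t ^ (β * (γ + 1) - ρ) = U * U ^ (-κ) := by
    rw [← rpow_one_add' hU0.le (by linarith), ← rpow_mul ht.le]
    congr 1
    linear_combination -hκ
  have hX : 0 < U ^ (-κ) := rpow_pos_of_pos hU0 _
  have hUκ : U ^ (1 - κ) = U * U ^ (-κ) := by rw [sub_eq_add_neg, rpow_add hU0, rpow_one]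
  set X := U ^ (-κ)
  set I₁ := ∫ u in Ioi U, u ^ (-κ) * ((2 + sin u) ^ γ * sin u)
  set I₂ := ∫ u in Ioi U, u ^ (-(κ + 1)) * ((2 + sin u) ^ γ * cos u)
  have hI₁ : a * (U * X) - B * X ≤ I₁ := by
    rw [hUκ] at hmain
    have := (abs_le.1 hmain).1
    simp only [a]
    linear_combination this
  have hI₂ : -(β / ρ * (Kg / κ) * X) ≤ β / ρ * I₂ := by
    linear_combination mul_le_mul_of_nonneg_left (neg_le_of_abs_le herr) (div_pos hβ hρ).le
  have hD : D * X ≤ a / 2 * U * X :=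
    mul_le_mul_of_nonneg_right (by rw [div_le_iff₀ ha] at hU; linarith) hX.le
  rw [hexp]
  simp only [D] at hD
  linear_combination hI₁ + hI₂ + hD

lemma eventually_mul_rpow_le_mul_rpow_nhdsGT_zero {a b c : ℝ} (K : ℝ) (hc : 0 < c) (hab : b < a) :
    ∀ᶠ t in 𝓝[>] 0, K * t ^ a ≤ c * t ^ b := by
  filter_upwards [self_mem_nhdsWithin,
    (tendsto_rpow_neg_nhdsGT_zero (sub_neg.2 hab)).eventually_ge_atTop (K / c)] with t ht hK
  calc K * t ^ a ≤ c * t ^ (b - a) * t ^ a :=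
        mul_le_mul_of_nonneg_right ((div_le_iff₀' hc).1 hK) (rpow_nonneg ht.out.le a)
    _ = c * t ^ b := by rw [mul_assoc, ← rpow_add ht, sub_add_cancel]

theorem example_one_estimates_general (γ p β ρ : ℝ)
    (hγ : 1 < γ) (hγp : γ < p) (hp : p < 2)
    (hβ : 0 < β) (hρ : 0 < ρ)
    (h₁ : γ < ρ / β) (h₃ : (ρ + 1) / β < p)
    (x₁ x₂ : ℝ → ℝ)
    (hx₁ : ∀ t : ℝ, 0 < t → x₁ t = t ^ β * Real.cos (t ^ (-ρ)))
    (hx₂ : ∀ t : ℝ, 0 < t → x₂ t = t ^ β * (2 + Real.sin (t ^ (-ρ))))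
    (hx₁0 : x₁ 0 = 0) (hx₂0 : x₂ 0 = 0) :
    (∃ C > 0, ∀ s ∈ Set.Icc (0 : ℝ) 1, ∀ t ∈ Set.Icc (0 : ℝ) 1,
      |x₁ s - x₁ t| ≤ C * |s - t| ^ (1 / p) ∧
      |x₂ s - x₂ t| ≤ C * |s - t| ^ (1 / p)) ∧
    (∀ t : ℝ, 0 < t → 0 < x₂ t) ∧
    (∃ c > 0, ∃ T > 0, ∀ t : ℝ, 0 < t → t ≤ T →
      (∫ s in Set.Ioc (0 : ℝ) t, (x₂ s) ^ γ * deriv x₁ s)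
          ≥ c * t ^ (β * (γ + 1) - ρ) ∧
      c * t ^ (β * (γ + 1) - ρ) ≥ 3 * t ^ β ∧
      3 * t ^ β ≥ x₂ t) := by
  rw [div_lt_iff₀ hβ] at h₃
  rw [lt_div_iff₀ hβ] at h₁
  have hp0 : 0 < p := by linarith
  have hαρβ : 1 / p * (ρ + 1) ≤ β := by
    rw [one_div_mul_eq_div, div_le_iff₀ hp0]; linarith
  have hα1 : 1 / p ≤ 1 := (div_le_one hp0).2 (by linarith)
  have hρβγ : ρ < β * (γ + 1) := by nlinarith
  have hβγρ : β * (γ + 1) - ρ < β := by nlinarith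
  refine ⟨?_, fun t ht => ?_, ?_⟩
  · obtain ⟨C₁, hC₁, hx₁C⟩ := exists_holder_of_eq_rpow_mul_comp_rpow_neg (M := 1) (L := 1)
      hx₁ hx₁0 abs_cos_le_one (fun u v => by simpa using abs_cos_sub_cos_le u v) zero_le_one
      hβ hρ (by positivity) hα1 hαρβ
    obtain ⟨C₂, -, hx₂C⟩ := exists_holder_of_eq_rpow_mul_comp_rpow_neg (M := 3) (L := 1)
      (F := fun u => 2 + sin u) hx₂ hx₂0
      (fun u => abs_le.2 ⟨by linarith [neg_one_le_sin u], by linarith [sin_le_one u]⟩)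
      (fun u v => by simpa using abs_sin_sub_sin_le u v) zero_le_one hβ hρ (by positivity)
      hα1 hαρβ
    refine ⟨max C₁ C₂, lt_max_of_lt_left hC₁, fun s hs t ht => ⟨?_, ?_⟩⟩
    · exact (hx₁C s hs t ht).trans
        (mul_le_mul_of_nonneg_right (le_max_left _ _) (rpow_nonneg (abs_nonneg _) _))
    · exact (hx₂C s hs t ht).trans
        (mul_le_mul_of_nonneg_right (le_max_right _ _) (rpow_nonneg (abs_nonneg _) _))
  · rw [hx₂ t ht]
    exact mul_pos (rpow_pos_of_pos ht β) (by linarith [neg_one_le_sin (t ^ (-ρ))])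
  obtain ⟨c, hc, hI⟩ :=
    exists_eventually_le_integral_Ioc (γ := γ) (by linarith) hβ hρ hρβγ hx₁ hx₂
  obtain ⟨T, hT, hTsub⟩ := mem_nhdsGT_iff_exists_Ioc_subset.1
    (hI.and (eventually_mul_rpow_le_mul_rpow_nhdsGT_zero 3 hc hβγρ))
  refine ⟨c, hc, T, hT, fun t ht htT => ⟨(hTsub ⟨ht, htT⟩).1, (hTsub ⟨ht, htT⟩).2, ?_⟩⟩
  rw [hx₂ t ht]
  nlinarith [sin_le_one (t ^ (-ρ)), rpow_pos_of_pos ht β]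

/-- Key estimates for Example 1 of the paper (non-uniqueness when `γ < p`): the
oscillatory paths `x¹(t) = t^β cos(t^{-ρ})`, `x²(t) = t^β(2 + sin(t^{-ρ}))` are
`(1/p)`-Hölder on `[0,1]`, `x² > 0` for `t > 0`, and for small `t`,
`∫₀ᵗ (x²)^γ dx¹ ≥ c·t^{β(γ+1)-ρ} ≥ 3t^β ≥ x²(t)` (the integral written as a
Lebesgue integral against the derivative of `x¹`, which is smooth on `(0,1]`). -/
theorem example_one_estimates (γ p β ρ : ℝ)
    (hγ : 1 < γ) (hγp : γ < p) (hp : p < 2)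
    (hβ : 0 < β) (hρ : 0 < ρ)
    (h₁ : γ < ρ / β) (h₂ : ρ / β < (ρ + 1) / β) (h₃ : (ρ + 1) / β < p)
    (x₁ x₂ : ℝ → ℝ)
    (hx₁ : ∀ t : ℝ, 0 < t → x₁ t = t ^ β * Real.cos (t ^ (-ρ)))
    (hx₂ : ∀ t : ℝ, 0 < t → x₂ t = t ^ β * (2 + Real.sin (t ^ (-ρ))))
    (hx₁0 : x₁ 0 = 0) (hx₂0 : x₂ 0 = 0) :
    (∃ C > 0, ∀ s ∈ Set.Icc (0 : ℝ) 1, ∀ t ∈ Set.Icc (0 : ℝ) 1,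
      |x₁ s - x₁ t| ≤ C * |s - t| ^ (1 / p) ∧
      |x₂ s - x₂ t| ≤ C * |s - t| ^ (1 / p)) ∧
    (∀ t : ℝ, 0 < t → 0 < x₂ t) ∧
    (∃ c > 0, ∃ T > 0, ∀ t : ℝ, 0 < t → t ≤ T →
      (∫ s in Set.Ioc (0 : ℝ) t, (x₂ s) ^ γ * deriv x₁ s)
          ≥ c * t ^ (β * (γ + 1) - ρ) ∧
      c * t ^ (β * (γ + 1) - ρ) ≥ 3 * t ^ β ∧
      3 * t ^ β ≥ x₂ t) :=
  example_one_estimates_general γ p β ρ hγ hγp hp hβ hρ h₁ h₃ x₁ x₂ hx₁ hx₂ hx₁0 hx₂0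
end

section
/- Fix $\beta$ and $\rho$ with $0 < \beta/(\rho+1)$ and let $\alpha < \beta/(\rho+1)$ with $0 < \alpha \le 1$. Then the function $x(t) = t^\beta \cos(t^{-\rho})$ for $t \in (0,1]$, $x(0) = 0$, is Hölder continuous of exponent $\alpha$ on $[0,1]$: there is $C > 0$ with $|x(s) - x(t)| \le C|s-t|^\alpha$ for all $s,t \in [0,1]$. -/
/-!
For `0 ≤ t ≤ s ≤ 1` put `h = s - t` and compare `h` with `t ^ (ρ + 1)`, the scale on which
`t ^ (-ρ)` moves by order one. If `h ≥ t ^ (ρ + 1)`, then `s ≤ 2 h ^ (1 / (ρ + 1))`, and the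
bound `|x| ≤ t ^ β` alone gives `|x s - x t| ≤ 2 ^ (β + 1) h ^ (β / (ρ + 1))`. Otherwise the
mean value theorem with `|x'(u)| ≤ (β + ρ) u ^ (β - ρ - 1)` gives the bound
`(β + ρ) (t ^ (β - ρ - 1) + 1) h`, and `t ^ (β - ρ - 1) h ≤ h ^ α` because
`h ^ (1 - α) ≤ t ^ ((ρ + 1) (1 - α))` and `α (ρ + 1) ≤ β`.
-/

open Real Set

noncomputable def oscillatory (β ρ t : ℝ) : ℝ := t ^ β * cos (t ^ (-ρ))

noncomputable def oscillatoryDeriv (β ρ u : ℝ) : ℝ :=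
  β * u ^ (β - 1) * cos (u ^ (-ρ)) + ρ * u ^ (β - ρ - 1) * sin (u ^ (-ρ))

variable {β ρ : ℝ}

theorem abs_oscillatory_le {t : ℝ} (ht : 0 ≤ t) : |oscillatory β ρ t| ≤ t ^ β := by
  rw [oscillatory, abs_mul, abs_of_nonneg (rpow_nonneg ht β)]
  exact mul_le_of_le_one_right (rpow_nonneg ht β) (abs_cos_le_one _)

theorem hasDerivAt_oscillatory {u : ℝ} (hu : 0 < u) :
    HasDerivAt (oscillatory β ρ) (oscillatoryDeriv β ρ u) u := by
  have hcos :
      HasDerivAt (fun v : ℝ => cos (v ^ (-ρ))) (-sin (u ^ (-ρ)) * (-ρ * u ^ (-ρ - 1))) u :=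
    (hasDerivAt_cos _).comp u (hasDerivAt_rpow_const (Or.inl hu.ne'))
  refine ((hasDerivAt_rpow_const (p := β) (Or.inl hu.ne')).mul hcos).congr_deriv ?_
  have : u ^ (β - ρ - 1) = u ^ β * u ^ (-ρ - 1) := by rw [← rpow_add hu]; ring_nf
  rw [oscillatoryDeriv, this]
  ring

theorem abs_oscillatoryDeriv_le (hβ : 0 ≤ β) (hρ : 0 ≤ ρ) {u : ℝ} (hu : 0 < u) (hu1 : u ≤ 1) :
    |oscillatoryDeriv β ρ u| ≤ (β + ρ) * u ^ (β - ρ - 1) := by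
  have hmono : u ^ (β - 1) ≤ u ^ (β - ρ - 1) := rpow_le_rpow_of_exponent_ge hu hu1 (by linarith)
  have hcos : |β * u ^ (β - 1) * cos (u ^ (-ρ))| ≤ β * u ^ (β - ρ - 1) := by
    rw [abs_mul, abs_of_nonneg (by positivity : 0 ≤ β * u ^ (β - 1))]
    exact (mul_le_of_le_one_right (by positivity) (abs_cos_le_one _)).trans
      (mul_le_mul_of_nonneg_left hmono hβ)
  have hsin : |ρ * u ^ (β - ρ - 1) * sin (u ^ (-ρ))| ≤ ρ * u ^ (β - ρ - 1) := by
    rw [abs_mul, abs_of_nonneg (by positivity : 0 ≤ ρ * u ^ (β - ρ - 1))]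
    exact mul_le_of_le_one_right (by positivity) (abs_sin_le_one _)
  calc |oscillatoryDeriv β ρ u| ≤ β * u ^ (β - ρ - 1) + ρ * u ^ (β - ρ - 1) :=
        (abs_add_le _ _).trans (add_le_add hcos hsin)
    _ = (β + ρ) * u ^ (β - ρ - 1) := by ring

theorem rpow_le_rpow_add_one_of_le_one {t u : ℝ} (e : ℝ) (ht : 0 < t) (htu : t ≤ u)
    (hu1 : u ≤ 1) :
    u ^ e ≤ t ^ e + 1 := by
  rcases le_or_gt e 0 with he | he
  · linarith [rpow_le_rpow_of_nonpos ht htu he, rpow_nonneg (ht.trans_le htu).le e]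
  · linarith [rpow_le_one (ht.trans_le htu).le hu1 he.le, rpow_nonneg ht.le e]

theorem abs_oscillatory_sub_le_mul_sub (hβ : 0 ≤ β) (hρ : 0 ≤ ρ) {s t : ℝ} (ht : 0 < t)
    (hts : t ≤ s) (hs1 : s ≤ 1) :
    |oscillatory β ρ s - oscillatory β ρ t| ≤ (β + ρ) * (t ^ (β - ρ - 1) + 1) * (s - t) := by
  refine norm_image_sub_le_of_norm_deriv_le_segment'
    (fun u hu => (hasDerivAt_oscillatory (ht.trans_le hu.1)).hasDerivWithinAt)
    (fun u ⟨htu, hus⟩ => ?_) s ⟨hts, le_rfl⟩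
  have hu1 : u ≤ 1 := hus.le.trans hs1
  calc ‖oscillatoryDeriv β ρ u‖ ≤ (β + ρ) * u ^ (β - ρ - 1) :=
        abs_oscillatoryDeriv_le hβ hρ (ht.trans_le htu) hu1
    _ ≤ (β + ρ) * (t ^ (β - ρ - 1) + 1) := by
      gcongr
      exact rpow_le_rpow_add_one_of_le_one _ ht htu hu1

theorem rpow_sub_mul_le_rpow {t h p α : ℝ} (ht : 0 < t) (ht1 : t ≤ 1) (hh : 0 ≤ h)
    (hht : h ≤ t ^ p) (hα₁ : α ≤ 1) (hαp : α * p ≤ β) : t ^ (β - p) * h ≤ h ^ α := by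
  have hsplit : h = h ^ (1 - α) * h ^ α := by
    rw [← rpow_add' hh (by norm_num), sub_add_cancel, rpow_one]
  have hpow : h ^ (1 - α) ≤ t ^ (p * (1 - α)) := by
    rw [rpow_mul ht.le]
    exact rpow_le_rpow hh hht (by linarith)
  have hexp : t ^ (β - p) * t ^ (p * (1 - α)) ≤ 1 := by
    rw [← rpow_add ht]
    exact rpow_le_one ht.le ht1 (by linarith)
  calc t ^ (β - p) * h = t ^ (β - p) * h ^ (1 - α) * h ^ α := by rw [mul_assoc, ← hsplit]
    _ ≤ t ^ (β - p) * t ^ (p * (1 - α)) * h ^ α := by gcongr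
    _ ≤ 1 * h ^ α := by gcongr
    _ = h ^ α := one_mul _

theorem abs_oscillatory_sub_le_of_sub_le_rpow (hβ : 0 ≤ β) (hρ : 0 ≤ ρ) {α : ℝ} (hα₀ : 0 ≤ α)
    (hα₁ : α ≤ 1) (hα : α ≤ β / (ρ + 1)) {s t : ℝ} (ht : 0 < t) (hts : t ≤ s) (hs1 : s ≤ 1)
    (hnear : s - t ≤ t ^ (ρ + 1)) :
    |oscillatory β ρ s - oscillatory β ρ t| ≤ 2 * (β + ρ) * (s - t) ^ α := by
  have hh : 0 ≤ s - t := sub_nonneg.2 hts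
  have hlin : s - t ≤ (s - t) ^ α :=
    (rpow_one _).symm.le.trans (rpow_le_rpow_of_exponent_ge' hh (by linarith) hα₀ hα₁)
  have hpow : t ^ (β - ρ - 1) * (s - t) ≤ (s - t) ^ α := by
    rw [sub_sub]
    exact rpow_sub_mul_le_rpow ht (hts.trans hs1) hh hnear hα₁ ((le_div_iff₀ (by linarith)).1 hα)
  calc |oscillatory β ρ s - oscillatory β ρ t| ≤ (β + ρ) * (t ^ (β - ρ - 1) + 1) * (s - t) :=
        abs_oscillatory_sub_le_mul_sub hβ hρ ht hts hs1
    _ = (β + ρ) * (t ^ (β - ρ - 1) * (s - t) + (s - t)) := by ring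
    _ ≤ (β + ρ) * ((s - t) ^ α + (s - t) ^ α) := by gcongr
    _ = 2 * (β + ρ) * (s - t) ^ α := by ring

theorem abs_oscillatory_sub_le_of_rpow_le_sub (hβ : 0 ≤ β) (hρ : 0 ≤ ρ) {α : ℝ} (hα₀ : 0 ≤ α)
    (hα : α ≤ β / (ρ + 1)) {s t : ℝ} (ht : 0 ≤ t) (hts : t ≤ s) (hst1 : s - t ≤ 1)
    (hfar : t ^ (ρ + 1) ≤ s - t) :
    |oscillatory β ρ s - oscillatory β ρ t| ≤ 2 ^ (β + 1) * (s - t) ^ α := by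
  have hh : 0 ≤ s - t := sub_nonneg.2 hts
  have hρ1 : 0 < ρ + 1 := by linarith
  have hinv : (ρ + 1)⁻¹ ≤ 1 := inv_le_one_of_one_le₀ (by linarith)
  have ht_le : t ≤ (s - t) ^ (ρ + 1)⁻¹ := (le_rpow_inv_iff_of_pos ht hh hρ1).2 hfar
  have hh_le : s - t ≤ (s - t) ^ (ρ + 1)⁻¹ :=
    (rpow_one _).symm.le.trans (rpow_le_rpow_of_exponent_ge' hh hst1 (by positivity) hinv)
  have hs_le : s ^ β ≤ 2 ^ β * (s - t) ^ α :=
    calc s ^ β ≤ (2 * (s - t) ^ (ρ + 1)⁻¹) ^ β := rpow_le_rpow (ht.trans hts) (by linarith) hβ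
      _ = 2 ^ β * (s - t) ^ (β / (ρ + 1)) := by
        rw [mul_rpow zero_le_two (by positivity), ← rpow_mul hh, inv_mul_eq_div]
      _ ≤ 2 ^ β * (s - t) ^ α :=
        mul_le_mul_of_nonneg_left (rpow_le_rpow_of_exponent_ge' hh hst1 hα₀ hα) (by positivity)
  calc |oscillatory β ρ s - oscillatory β ρ t|
      ≤ |oscillatory β ρ s| + |oscillatory β ρ t| := abs_sub _ _
    _ ≤ s ^ β + s ^ β := add_le_add (abs_oscillatory_le (ht.trans hts))
        ((abs_oscillatory_le ht).trans (rpow_le_rpow ht hts hβ))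
    _ ≤ 2 ^ (β + 1) * (s - t) ^ α := by rw [rpow_add_one two_ne_zero]; linarith

theorem abs_oscillatory_sub_le_of_le (hβ : 0 ≤ β) (hρ : 0 ≤ ρ) {α : ℝ} (hα₀ : 0 ≤ α)
    (hα₁ : α ≤ 1) (hα : α ≤ β / (ρ + 1)) {s t : ℝ} (ht : 0 ≤ t) (hts : t ≤ s) (hs1 : s ≤ 1) :
    |oscillatory β ρ s - oscillatory β ρ t| ≤ (2 ^ (β + 1) + 2 * (β + ρ)) * (s - t) ^ α := by
  have hpow : 0 ≤ (s - t) ^ α := rpow_nonneg (sub_nonneg.2 hts) α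
  rcases lt_or_ge (s - t) (t ^ (ρ + 1)) with hnear | hfar
  · have htpos : 0 < t := ht.lt_of_ne <| by
      rintro rfl
      rw [zero_rpow (by linarith)] at hnear
      linarith
    calc _ ≤ 2 * (β + ρ) * (s - t) ^ α :=
          abs_oscillatory_sub_le_of_sub_le_rpow hβ hρ hα₀ hα₁ hα htpos hts hs1 hnear.le
      _ ≤ _ := by nlinarith [rpow_pos_of_pos two_pos (β + 1)]
  · calc _ ≤ 2 ^ (β + 1) * (s - t) ^ α :=
          abs_oscillatory_sub_le_of_rpow_le_sub hβ hρ hα₀ hα ht hts (by linarith) hfar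
      _ ≤ _ := by nlinarith

theorem abs_oscillatory_sub_le_mul_abs_sub_rpow (hβ : 0 ≤ β) (hρ : 0 ≤ ρ) {α : ℝ} (hα₀ : 0 ≤ α)
    (hα₁ : α ≤ 1) (hα : α ≤ β / (ρ + 1)) {s t : ℝ} (hs : s ∈ Icc (0 : ℝ) 1)
    (ht : t ∈ Icc (0 : ℝ) 1) :
    |oscillatory β ρ s - oscillatory β ρ t| ≤ (2 ^ (β + 1) + 2 * (β + ρ)) * |s - t| ^ α := by
  wlog hts : t ≤ s generalizing s t
  · rw [abs_sub_comm, abs_sub_comm s]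
    exact this ht hs (le_of_not_ge hts)
  rw [abs_of_nonneg (sub_nonneg.2 hts)]
  exact abs_oscillatory_sub_le_of_le hβ hρ hα₀ hα₁ hα ht.1 hts hs.2

/-- Hölder regularity of the oscillatory function `t^β cos(t^{-ρ})`: if
`0 < α ≤ 1` and `α < β/(ρ+1)`, then `x(t) = t^β cos(t^{-ρ})` (with `x(0)=0`) is
Hölder of exponent `α` on `[0,1]`. -/
theorem oscillatory_function_holder (β ρ α : ℝ)
    (hβ : 0 < β) (hρ : 0 < ρ) (hα₀ : 0 < α) (hα₁ : α ≤ 1)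
    (hα : α < β / (ρ + 1))
    (x : ℝ → ℝ)
    (hx : ∀ t : ℝ, 0 < t → x t = t ^ β * Real.cos (t ^ (-ρ)))
    (hx0 : x 0 = 0) :
    ∃ C > 0, ∀ s ∈ Set.Icc (0 : ℝ) 1, ∀ t ∈ Set.Icc (0 : ℝ) 1,
      |x s - x t| ≤ C * |s - t| ^ α := by
  have hx_eq : ∀ t ∈ Icc (0 : ℝ) 1, x t = oscillatory β ρ t := by
    rintro t ⟨ht, -⟩
    rcases ht.eq_or_lt with rfl | ht
    · rw [hx0, oscillatory, zero_rpow hβ.ne', zero_mul]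
    · exact hx t ht
  refine ⟨2 ^ (β + 1) + 2 * (β + ρ), by positivity, fun s hs t ht => ?_⟩
  rw [hx_eq s hs, hx_eq t ht]
  exact abs_oscillatory_sub_le_mul_abs_sub_rpow hβ.le hρ.le hα₀.le hα₁ hα.le hs ht
end

section
/- Let $1 < p < \gamma < 2$, set $\beta = \gamma - 1$, and let $A(R), D(R)$ be positive increasing functions on $[1,\infty)$ with $D(R) \le R^\beta A(R)$. Define $F(y) = A(y)^{-\rho''} D(y)^{-\rho'}$ where $\rho' = (\beta p + 1 - p)/\beta$ and $\rho'' = (p-1)/\beta$, and suppose $\int_1^\infty F(y)\,dy < \infty$. Fix $r > 1/\rho$ where $\rho = \min(\rho', \rho'')$, and define $\tilde{D}(y) = \inf_{u \ge 1} u^r D(y/u)$ and $\tilde{A}(y) = \inf_{u \ge 1} u^r A(y/u)$, extending $D, A$ by $D(y) = D(1)$, $A(y) = A(1)$ for $0 \le y < 1$. Then $\tilde{F}(y) := \tilde{A}(y)^{-\rho''}\tilde{D}(y)^{-\rho'}$ satisfies $\int_1^\infty \tilde{F}(y)\,dy < \infty$. -/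
/-!
Write `F = A^(-ρ'') D^(-ρ')` and `s = r ρ > 1`. For `y > 0` pick dilations `u, v ≥ 1` realising
`Ã(y)` and `D̃(y)` up to a factor `2`; with `w = max u v`, monotonicity of `A` and `D` gives
`F̃(y) ≤ 2^(ρ' + ρ'') w^(-s) F(y / w)`. If `2^k ≤ w < 2^(k+1)` the right side is at most
`2^(ρ' + ρ'') q^k F(y / 2^(k+1))` with `q = 2^(-s)`, since `F` is decreasing. The `k`-th of these
dominating functions has integral `2^(ρ' + ρ'' + 1) (2q)^k ∫₀^∞ F` over `(0, ∞)`, and `2q < 1`.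
-/

open Set MeasureTheory Real

lemma monotone_of_monotoneOn_Ici_of_eq_const {f : ℝ → ℝ} {a : ℝ}
    (hmono : ∀ y z, a ≤ y → y ≤ z → f y ≤ f z) (hext : ∀ y, y < a → f y = f a) :
    Monotone f := by
  intro y z hyz
  rcases lt_or_ge y a with hy | hy
  · rw [hext y hy]
    rcases lt_or_ge z a with hz | hz
    · rw [hext z hz]
    · exact hmono a z le_rfl hz
  · exact hmono y z hy hyz

lemma Monotone.apply_le_of_eq_const {f : ℝ → ℝ} {a : ℝ} (hf : Monotone f)
    (hext : ∀ y, y < a → f y = f a) (x : ℝ) : f a ≤ f x := by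
  rcases lt_or_ge x a with hx | hx
  · exact (hext x hx).ge
  · exact hf hx

lemma antitone_rpow_neg_mul_rpow_neg {f g : ℝ → ℝ} {a b : ℝ} (hf : Monotone f)
    (hg : Monotone g) (hf0 : ∀ x, 0 < f x) (hg0 : ∀ x, 0 < g x) (ha : 0 ≤ a) (hb : 0 ≤ b) :
    Antitone fun y => f y ^ (-a) * g y ^ (-b) := fun x y hxy =>
  mul_le_mul (rpow_le_rpow_of_nonpos (hf0 x) (hf hxy) (by linarith))
    (rpow_le_rpow_of_nonpos (hg0 x) (hg hxy) (by linarith))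
    (rpow_nonneg (hg0 y).le _) (rpow_nonneg (hf0 x).le _)

lemma Antitone.integrableOn_Ioi_of_le {f : ℝ → ℝ} (hf : Antitone f) {a b : ℝ} (hab : a ≤ b)
    (h : IntegrableOn f (Ioi b)) : IntegrableOn f (Ioi a) := by
  have hcover : Ioi a ⊆ Icc a b ∪ Ioi b := Icc_union_Ioi_eq_Ici hab ▸ Ioi_subset_Ici_self
  exact ((hf.locallyIntegrable.integrableOn_isCompact isCompact_Icc).union h).mono_set hcover

noncomputable def infSmoothing (r : ℝ) (f : ℝ → ℝ) (y : ℝ) : ℝ :=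
  sInf {z : ℝ | ∃ u : ℝ, 1 ≤ u ∧ z = u ^ r * f (y / u)}

section infSmoothing

variable {r : ℝ} {f : ℝ → ℝ}

lemma infSmoothing_set_nonempty (y : ℝ) :
    {z : ℝ | ∃ u : ℝ, 1 ≤ u ∧ z = u ^ r * f (y / u)}.Nonempty :=
  ⟨f y, 1, le_rfl, by simp⟩

lemma infSmoothing_le (hf : ∀ x, 0 ≤ f x) {u : ℝ} (hu : 1 ≤ u) (y : ℝ) :
    infSmoothing r f y ≤ u ^ r * f (y / u) := by
  refine csInf_le ⟨0, ?_⟩ ⟨u, hu, rfl⟩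
  rintro _ ⟨v, hv, rfl⟩
  exact mul_nonneg (rpow_nonneg (by linarith) r) (hf _)

lemma le_infSmoothing (hr : 0 ≤ r) {c : ℝ} (hc : 0 ≤ c) (hcf : ∀ x, c ≤ f x) (y : ℝ) :
    c ≤ infSmoothing r f y := by
  refine le_csInf (infSmoothing_set_nonempty y) ?_
  rintro _ ⟨u, hu, rfl⟩
  exact (hcf _).trans (le_mul_of_one_le_left (hc.trans (hcf _)) (one_le_rpow hu hr))

lemma infSmoothing_pos (hr : 0 ≤ r) {c : ℝ} (hc : 0 < c) (hcf : ∀ x, c ≤ f x) (y : ℝ) :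
    0 < infSmoothing r f y :=
  hc.trans_le (le_infSmoothing hr hc.le hcf y)

lemma exists_lt_of_infSmoothing_lt {c y : ℝ} (h : infSmoothing r f y < c) :
    ∃ u, 1 ≤ u ∧ u ^ r * f (y / u) < c := by
  obtain ⟨_, ⟨u, hu, rfl⟩, hlt⟩ := exists_lt_of_csInf_lt (infSmoothing_set_nonempty y) h
  exact ⟨u, hu, hlt⟩

lemma monotone_infSmoothing (hf : Monotone f) (hf0 : ∀ x, 0 ≤ f x) :
    Monotone (infSmoothing r f) := by
  intro y z hyz
  refine le_csInf (infSmoothing_set_nonempty z) ?_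
  rintro _ ⟨u, hu, rfl⟩
  have hu0 : 0 < u := by linarith
  exact (infSmoothing_le hf0 hu y).trans <| mul_le_mul_of_nonneg_left
    (hf (div_le_div_of_nonneg_right hyz hu0.le)) (rpow_nonneg hu0.le r)

lemma exists_infSmoothing_rpow_neg_le {a c : ℝ} (hr : 0 ≤ r) (ha : 0 ≤ a) (hc : 0 < c)
    (hcf : ∀ x, c ≤ f x) (y : ℝ) :
    ∃ u, 1 ≤ u ∧ infSmoothing r f y ^ (-a) ≤ 2 ^ a * (u ^ (-(r * a)) * f (y / u) ^ (-a)) := by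
  have hS := infSmoothing_pos hr hc hcf y
  obtain ⟨u, hu, hlt⟩ := exists_lt_of_infSmoothing_lt (c := 2 * infSmoothing r f y) (by linarith)
  have hu0 : 0 < u := by linarith
  have hfu : 0 < f (y / u) := hc.trans_le (hcf _)
  refine ⟨u, hu, ?_⟩
  calc infSmoothing r f y ^ (-a) ≤ (u ^ r * f (y / u) / 2) ^ (-a) :=
        rpow_le_rpow_of_nonpos (by positivity) (by linarith) (by linarith)
    _ = 2 ^ a * (u ^ (-(r * a)) * f (y / u) ^ (-a)) := by
        rw [div_rpow (by positivity) zero_le_two, mul_rpow (by positivity) hfu.le,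
          ← rpow_mul hu0.le, mul_neg, rpow_neg zero_le_two, div_inv_eq_mul]
        ring

end infSmoothing

lemma rpow_neg_mul_rpow_neg_le_max {u v a b : ℝ} (hu : 1 ≤ u) (hv : 1 ≤ v) (ha : 0 ≤ a)
    (hb : 0 ≤ b) : u ^ (-a) * v ^ (-b) ≤ max u v ^ (-min a b) := by
  rcases le_total u v with huv | hvu
  · rw [max_eq_right huv]
    calc u ^ (-a) * v ^ (-b) ≤ 1 * v ^ (-min a b) :=
          mul_le_mul (rpow_le_one_of_one_le_of_nonpos hu (by linarith))
            (rpow_le_rpow_of_exponent_le hv (neg_le_neg (min_le_right a b)))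
            (by positivity) zero_le_one
      _ = v ^ (-min a b) := one_mul _
  · rw [max_eq_left hvu]
    calc u ^ (-a) * v ^ (-b) ≤ u ^ (-min a b) * 1 :=
          mul_le_mul (rpow_le_rpow_of_exponent_le hu (neg_le_neg (min_le_left a b)))
            (rpow_le_one_of_one_le_of_nonpos hv (by linarith))
            (by positivity) (by positivity)
      _ = u ^ (-min a b) := mul_one _

lemma exists_infSmoothing_rpow_neg_mul_le {r a b c d y : ℝ} {f g : ℝ → ℝ} (hr : 0 ≤ r)
    (ha : 0 ≤ a) (hb : 0 ≤ b) (hf : Monotone f) (hg : Monotone g) (hc : 0 < c) (hd : 0 < d)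
    (hcf : ∀ x, c ≤ f x) (hdg : ∀ x, d ≤ g x) (hy : 0 ≤ y) :
    ∃ w, 1 ≤ w ∧ infSmoothing r f y ^ (-a) * infSmoothing r g y ^ (-b) ≤
      2 ^ (a + b) * (w ^ (-(r * min a b)) * (f (y / w) ^ (-a) * g (y / w) ^ (-b))) := by
  obtain ⟨u, hu, hSf⟩ := exists_infSmoothing_rpow_neg_le hr ha hc hcf y
  obtain ⟨v, hv, hSg⟩ := exists_infSmoothing_rpow_neg_le hr hb hd hdg y
  have hfu : f (y / u) ^ (-a) ≤ f (y / max u v) ^ (-a) :=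
    rpow_le_rpow_of_nonpos (hc.trans_le (hcf _))
      (hf (div_le_div_of_nonneg_left hy (by linarith) (le_max_left u v))) (by linarith)
  have hgv : g (y / v) ^ (-b) ≤ g (y / max u v) ^ (-b) :=
    rpow_le_rpow_of_nonpos (hd.trans_le (hdg _))
      (hg (div_le_div_of_nonneg_left hy (by linarith) (le_max_right u v))) (by linarith)
  have huv : u ^ (-(r * a)) * v ^ (-(r * b)) ≤ max u v ^ (-(r * min a b)) := by
    rw [mul_min_of_nonneg a b hr]
    exact rpow_neg_mul_rpow_neg_le_max hu hv (by positivity) (by positivity)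
  have hfa : ∀ x, 0 ≤ f x ^ (-a) := fun x => rpow_nonneg (hc.le.trans (hcf x)) _
  have hgb : ∀ x, 0 ≤ g x ^ (-b) := fun x => rpow_nonneg (hd.le.trans (hdg x)) _
  refine ⟨max u v, hu.trans (le_max_left u v), ?_⟩
  calc infSmoothing r f y ^ (-a) * infSmoothing r g y ^ (-b)
      ≤ 2 ^ a * (u ^ (-(r * a)) * f (y / u) ^ (-a)) *
        (2 ^ b * (v ^ (-(r * b)) * g (y / v) ^ (-b))) :=
        mul_le_mul hSf hSg (rpow_nonneg (infSmoothing_pos hr hd hdg y).le _)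
          (mul_nonneg (by positivity) (mul_nonneg (by positivity) (hfa _)))
    _ = 2 ^ (a + b) *
          ((u ^ (-(r * a)) * v ^ (-(r * b))) * (f (y / u) ^ (-a) * g (y / v) ^ (-b))) := by
        rw [rpow_add two_pos]; ring
    _ ≤ 2 ^ (a + b) * (max u v ^ (-(r * min a b)) *
          (f (y / max u v) ^ (-a) * g (y / max u v) ^ (-b))) := by
        gcongr
        exacts [mul_nonneg (hfa _) (hgb _), hgb _, hfa _]

lemma exists_rpow_neg_mul_le_dyadic {F : ℝ → ℝ} (hF : Antitone F) (hF0 : ∀ x, 0 ≤ F x)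
    {s y w : ℝ} (hs : 0 ≤ s) (hy : 0 ≤ y) (hw : 1 ≤ w) :
    ∃ k : ℕ, w ^ (-s) * F (y / w) ≤ ((2 : ℝ) ^ (-s)) ^ k * F (y / 2 ^ (k + 1)) := by
  obtain ⟨k, hkw, hwk⟩ := exists_nat_pow_near hw one_lt_two
  refine ⟨k, mul_le_mul ?_ (hF (div_le_div_of_nonneg_left hy (by positivity) hwk.le))
    (hF0 _) (by positivity)⟩
  calc w ^ (-s) ≤ ((2 : ℝ) ^ k) ^ (-s) :=
        rpow_le_rpow_of_nonpos (by positivity) hkw (by linarith)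
    _ = ((2 : ℝ) ^ (-s)) ^ k := by
        rw [← rpow_natCast, ← rpow_natCast, ← rpow_mul zero_le_two, ← rpow_mul zero_le_two,
          mul_comm]

lemma integrable_of_ae_exists_norm_le {α : Type*} [MeasurableSpace α] {μ : Measure α}
    {f : α → ℝ} {g : ℕ → α → ℝ} (hf : AEStronglyMeasurable f μ) (hg : ∀ k, Integrable (g k) μ)
    (hg0 : ∀ k, 0 ≤ᵐ[μ] g k) (hsum : Summable fun k => ∫ a, g k a ∂μ)
    (hle : ∀ᵐ a ∂μ, ∃ k, ‖f a‖ ≤ g k a) : Integrable f μ := by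
  refine ⟨hf, ?_⟩
  calc ∫⁻ a, ‖f a‖ₑ ∂μ ≤ ∫⁻ a, ∑' k, ENNReal.ofReal (g k a) ∂μ := by
        refine lintegral_mono_ae (hle.mono fun a ⟨k, hk⟩ => ?_)
        rw [← ofReal_norm]
        exact (ENNReal.ofReal_le_ofReal hk).trans (ENNReal.le_tsum k)
    _ = ∑' k, ENNReal.ofReal (∫ a, g k a ∂μ) := by
        rw [lintegral_tsum fun k => (hg k).aemeasurable.ennreal_ofReal]
        simp_rw [ofReal_integral_eq_lintegral_ofReal (hg _) (hg0 _)]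
    _ = ENNReal.ofReal (∑' k, ∫ a, g k a ∂μ) :=
        (ENNReal.ofReal_tsum_of_nonneg (fun k => integral_nonneg_of_ae (hg0 k)) hsum).symm
    _ < ⊤ := ENNReal.ofReal_lt_top

lemma integrableOn_Ioi_zero_comp_div {F : ℝ → ℝ} (hF : IntegrableOn F (Ioi 0)) {c : ℝ}
    (hc : 0 < c) : IntegrableOn (fun y => F (y / c)) (Ioi 0) := by
  simpa [div_eq_mul_inv] using
    (integrableOn_Ioi_comp_mul_right_iff F 0 (inv_pos.2 hc)).2 (by simpa using hF)

lemma setIntegral_Ioi_zero_comp_div (F : ℝ → ℝ) {c : ℝ} (hc : 0 < c) :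
    ∫ y in Ioi 0, F (y / c) = c * ∫ x in Ioi 0, F x := by
  simpa [div_eq_mul_inv] using integral_comp_mul_right_Ioi F 0 (inv_pos.2 hc)

theorem integrableOn_Ioi_zero_of_le_dilations {f F : ℝ → ℝ} {s C : ℝ} (hF : Antitone F)
    (hF0 : ∀ x, 0 ≤ F x) (hFi : IntegrableOn F (Ioi 0)) (hs : 1 < s) (hC : 0 ≤ C)
    (hf : AEStronglyMeasurable f (volume.restrict (Ioi 0)))
    (hle : ∀ y, 0 < y → ∃ w, 1 ≤ w ∧ ‖f y‖ ≤ C * (w ^ (-s) * F (y / w))) :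
    IntegrableOn f (Ioi 0) := by
  set q : ℝ := 2 ^ (-s)
  have h2q : 2 * q < 1 := by
    calc 2 * q = 2 ^ (1 - s) := by rw [sub_eq_add_neg, rpow_add two_pos, rpow_one]
      _ < 1 := rpow_lt_one_of_one_lt_of_neg one_lt_two (by linarith)
  have hintegral : ∀ k : ℕ, ∫ y in Ioi 0, C * (q ^ k * F (y / 2 ^ (k + 1))) =
      2 * C * (∫ x in Ioi 0, F x) * (2 * q) ^ k := by
    intro k
    rw [integral_const_mul, integral_const_mul, setIntegral_Ioi_zero_comp_div F (by positivity)]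
    ring
  refine integrable_of_ae_exists_norm_le (g := fun k y => C * (q ^ k * F (y / 2 ^ (k + 1)))) hf
    (fun k => ((integrableOn_Ioi_zero_comp_div hFi (by positivity)).const_mul _).const_mul C)
    (fun k => ae_of_all _ fun y => mul_nonneg hC (mul_nonneg (by positivity) (hF0 _)))
    ?_ ?_
  · simp_rw [hintegral]
    exact (summable_geometric_of_lt_one (by positivity) h2q).mul_left _
  · refine ae_restrict_of_forall_mem measurableSet_Ioi fun y hy => ?_
    obtain ⟨w, hw, hfw⟩ := hle y hy
    obtain ⟨k, hk⟩ := exists_rpow_neg_mul_le_dyadic hF hF0 (s := s) (by linarith) (le_of_lt hy) hw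
    exact ⟨k, hfw.trans (mul_le_mul_of_nonneg_left hk hC)⟩

theorem smoothing_preserves_integrability_general (p γ β ρ' ρ'' ρ r : ℝ)
    (hp : 1 < p) (hpγ : p < γ) (hβ : β = γ - 1)
    (hρ' : ρ' = (β * p + 1 - p) / β) (hρ'' : ρ'' = (p - 1) / β)
    (hρ : ρ = min ρ' ρ'') (hr : 1 / ρ < r)
    (D A : ℝ → ℝ)
    (hDpos : ∀ y, 0 < D y) (hApos : ∀ y, 0 < A y)
    (hDmono : ∀ y z, 1 ≤ y → y ≤ z → D y ≤ D z)
    (hAmono : ∀ y z, 1 ≤ y → y ≤ z → A y ≤ A z)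
    (hDext : ∀ y : ℝ, y < 1 → D y = D 1) (hAext : ∀ y : ℝ, y < 1 → A y = A 1)
    (hint : MeasureTheory.IntegrableOn
      (fun y => A y ^ (-ρ'') * D y ^ (-ρ')) (Set.Ioi 1))
    (Dt At : ℝ → ℝ)
    (hDt : ∀ y, Dt y = sInf {z : ℝ | ∃ u : ℝ, 1 ≤ u ∧ z = u ^ r * D (y / u)})
    (hAt : ∀ y, At y = sInf {z : ℝ | ∃ u : ℝ, 1 ≤ u ∧ z = u ^ r * A (y / u)}) :
    MeasureTheory.IntegrableOn
      (fun y => At y ^ (-ρ'') * Dt y ^ (-ρ')) (Set.Ioi 1) := by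
  have hβ0 : 0 < β := by linarith
  have hρ'0 : 0 < ρ' := by
    -- `β p + 1 - p = (γ - 1) p + 1 - p > (p - 1) ^ 2` since `γ > p`
    rw [hρ', hβ]
    exact div_pos (by nlinarith [mul_lt_mul_of_pos_left hpγ (by linarith : (0 : ℝ) < p)])
      (by linarith)
  have hρ''0 : 0 < ρ'' := by rw [hρ'']; exact div_pos (by linarith) hβ0
  have hρ0 : 0 < ρ := hρ ▸ lt_min hρ'0 hρ''0
  have hrρ : 1 < r * ρ := by rwa [div_lt_iff₀ hρ0] at hr
  have hr0 : 0 ≤ r := ((one_div_pos.2 hρ0).trans hr).le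
  have hD := monotone_of_monotoneOn_Ici_of_eq_const hDmono hDext
  have hA := monotone_of_monotoneOn_Ici_of_eq_const hAmono hAext
  obtain rfl : Dt = infSmoothing r D := funext hDt
  obtain rfl : At = infSmoothing r A := funext hAt
  have hF := antitone_rpow_neg_mul_rpow_neg hA hD hApos hDpos hρ''0.le hρ'0.le
  refine (integrableOn_Ioi_zero_of_le_dilations hF
    (fun x => mul_nonneg (rpow_nonneg (hApos x).le _) (rpow_nonneg (hDpos x).le _))
    (hF.integrableOn_Ioi_of_le zero_le_one hint) hrρ (C := 2 ^ (ρ'' + ρ')) (by positivity)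
    ?_ ?_).mono_set (Ioi_subset_Ioi zero_le_one)
  · have hAm := (monotone_infSmoothing (r := r) hA fun x => (hApos x).le).measurable
    have hDm := (monotone_infSmoothing (r := r) hD fun x => (hDpos x).le).measurable
    exact ((hAm.pow_const _).mul (hDm.pow_const _)).aestronglyMeasurable
  · intro y hy
    have hA1 := hA.apply_le_of_eq_const hAext
    have hD1 := hD.apply_le_of_eq_const hDext
    obtain ⟨w, hw, hle⟩ := exists_infSmoothing_rpow_neg_mul_le hr0 hρ''0.le hρ'0.le hA hD
      (hApos 1) (hDpos 1) hA1 hD1 hy.le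
    refine ⟨w, hw, ?_⟩
    rw [norm_of_nonneg (mul_nonneg (rpow_nonneg (infSmoothing_pos hr0 (hApos 1) hA1 y).le _)
      (rpow_nonneg (infSmoothing_pos hr0 (hDpos 1) hD1 y).le _)), hρ, min_comm]
    exact hle

/-- Regularization step in Theorem 9(b) of the paper: the infimal smoothings
`D̃(y) = inf_{u ≥ 1} u^r D(y/u)`, `Ã(y) = inf_{u ≥ 1} u^r A(y/u)` of the growth
functions preserve finiteness of `∫₁^∞ A^{-ρ''} D^{-ρ'}`. -/
theorem smoothing_preserves_integrability (p γ β ρ' ρ'' ρ r : ℝ)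
    (hp : 1 < p) (hpγ : p < γ) (hγ : γ < 2) (hβ : β = γ - 1)
    (hρ' : ρ' = (β * p + 1 - p) / β) (hρ'' : ρ'' = (p - 1) / β)
    (hρ : ρ = min ρ' ρ'') (hr : 1 / ρ < r)
    (D A : ℝ → ℝ)
    (hDpos : ∀ y, 0 < D y) (hApos : ∀ y, 0 < A y)
    (hDmono : ∀ y z, 1 ≤ y → y ≤ z → D y ≤ D z)
    (hAmono : ∀ y z, 1 ≤ y → y ≤ z → A y ≤ A z)
    (hDext : ∀ y : ℝ, y < 1 → D y = D 1) (hAext : ∀ y : ℝ, y < 1 → A y = A 1)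
    (hDA : ∀ R : ℝ, 1 ≤ R → D R ≤ R ^ β * A R)
    (hint : MeasureTheory.IntegrableOn
      (fun y => A y ^ (-ρ'') * D y ^ (-ρ')) (Set.Ioi 1))
    (Dt At : ℝ → ℝ)
    (hDt : ∀ y, Dt y = sInf {z : ℝ | ∃ u : ℝ, 1 ≤ u ∧ z = u ^ r * D (y / u)})
    (hAt : ∀ y, At y = sInf {z : ℝ | ∃ u : ℝ, 1 ≤ u ∧ z = u ^ r * A (y / u)}) :
    MeasureTheory.IntegrableOn
      (fun y => At y ^ (-ρ'') * Dt y ^ (-ρ')) (Set.Ioi 1) :=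
  smoothing_preserves_integrability_general p γ β ρ' ρ'' ρ r hp hpγ hβ hρ' hρ'' hρ hr D A hDpos
    hApos hDmono hAmono hDext hAext hint Dt At hDt hAt
end
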